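/- Fix integers L ≥ 1, r ≥ 1, m ≥ 0 with m < m_0 ≤ rL. For an even pooled section starting at time s with focal offsets a ∈ {m, m+1, ..., rL−1}, and a lag ℓ ∈ {m+1,...,m_0}, the number of focal offsets a such that a+1 ≤ ℓ ≤ a+L equals min{L, ℓ−m}. Consequently, toggling the assignment on the L time points immediately preceding the section shifts the focal mean by δ_m(n) = (1/n)·∑_{ℓ=m+1}^{m_0} min{L, ℓ−m}·β_ℓ, where n = rL−m. -/
import Mathlib


/-- Tail-signal derivation for the carryover test.  (i) Counting identity: for a lag
`ℓ ∈ {m+1, …, m₀}` with `m₀ ≤ rL`, the number of focal offsets `a ∈ {m, …, rL-1}` such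
that `a + 1 ≤ ℓ ≤ a + L` equals `min L (ℓ - m)`.  (ii) Toggling the assignment on the
`L` time points immediately preceding the section shifts the focal mean by
`δ_m(n) = (1/n)·∑_{ℓ=m+1}^{m₀} min{L, ℓ-m}·β_ℓ` with `n = rL - m`. -/
theorem stmt11 (L r m m0 : ℕ) (hL : 1 ≤ L) (hr : 1 ≤ r) (hm : m < m0)
    (hm0 : m0 ≤ r * L)
    (β : ℕ → ℝ) (μ0 : ℝ) (ε : ℕ → ℝ) (Y : ℕ → (ℕ → ℝ) → ℝ)
    (hY : ∀ t w, Y t w = μ0 + (∑ ℓ ∈ Finset.range (m0 + 1), β ℓ * w (t - ℓ)) + ε t)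
    (s : ℕ) (hs : r * L ≤ s)
    (w1 w0 : ℕ → ℝ)
    (h1 : ∀ u, s - L ≤ u → u < s → w1 u = 1)
    (h0 : ∀ u, s - L ≤ u → u < s → w0 u = 0)
    (hagree : ∀ u, u < s - L ∨ s ≤ u → w1 u = w0 u) :
    (∀ ℓ, m + 1 ≤ ℓ → ℓ ≤ m0 →
        ((Finset.Icc m (r * L - 1)).filter (fun a => a + 1 ≤ ℓ ∧ ℓ ≤ a + L)).card
          = min L (ℓ - m)) ∧
    ((r * L : ℝ) - (m : ℝ))⁻¹ *
        ∑ a ∈ Finset.Icc m (r * L - 1), (Y (s + a) w1 - Y (s + a) w0)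
      = ((r * L : ℝ) - (m : ℝ))⁻¹ *
        ∑ ℓ ∈ Finset.Icc (m + 1) m0, ((min L (ℓ - m) : ℕ) : ℝ) * β ℓ := by
  have hrL1 : 1 ≤ r * L := Nat.one_le_iff_ne_zero.mpr (by positivity)
  have count : ∀ ℓ, m + 1 ≤ ℓ → ℓ ≤ m0 →
      ((Finset.Icc m (r * L - 1)).filter (fun a => a + 1 ≤ ℓ ∧ ℓ ≤ a + L)).card
        = min L (ℓ - m) := by
    intro ℓ h1ℓ h2ℓ
    have heq : (Finset.Icc m (r * L - 1)).filter (fun a => a + 1 ≤ ℓ ∧ ℓ ≤ a + L)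
        = Finset.Icc (max m (ℓ - L)) (ℓ - 1) := by
      ext a
      simp only [Finset.mem_filter, Finset.mem_Icc, max_le_iff]
      omega
    rw [heq, Nat.card_Icc]
    omega
  refine ⟨count, ?_⟩
  congr 1
  have step1 : ∀ a ∈ Finset.Icc m (r * L - 1),
      Y (s + a) w1 - Y (s + a) w0
        = ∑ ℓ ∈ Finset.range (m0 + 1), (if a + 1 ≤ ℓ ∧ ℓ ≤ a + L then β ℓ else 0) := by
    intro a ha
    rw [Finset.mem_Icc] at ha
    rw [hY, hY]
    have hterm : ∀ ℓ ∈ Finset.range (m0 + 1),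
        β ℓ * w1 (s + a - ℓ) - β ℓ * w0 (s + a - ℓ)
          = if a + 1 ≤ ℓ ∧ ℓ ≤ a + L then β ℓ else 0 := by
      intro ℓ hℓ
      rw [Finset.mem_range] at hℓ
      by_cases h : a + 1 ≤ ℓ ∧ ℓ ≤ a + L
      · rw [if_pos h, h1 _ (by omega) (by omega), h0 _ (by omega) (by omega)]; ring
      · rw [if_neg h, hagree _ (by omega)]; ring
    calc μ0 + (∑ ℓ ∈ Finset.range (m0 + 1), β ℓ * w1 (s + a - ℓ)) + ε (s + a)
        - (μ0 + (∑ ℓ ∈ Finset.range (m0 + 1), β ℓ * w0 (s + a - ℓ)) + ε (s + a))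
        = ∑ ℓ ∈ Finset.range (m0 + 1),
            (β ℓ * w1 (s + a - ℓ) - β ℓ * w0 (s + a - ℓ)) := by
          rw [Finset.sum_sub_distrib]; ring
      _ = ∑ ℓ ∈ Finset.range (m0 + 1), (if a + 1 ≤ ℓ ∧ ℓ ≤ a + L then β ℓ else 0) :=
          Finset.sum_congr rfl hterm
  rw [Finset.sum_congr rfl step1, Finset.sum_comm]
  have step2 : ∀ ℓ ∈ Finset.range (m0 + 1),
      (∑ a ∈ Finset.Icc m (r * L - 1), if a + 1 ≤ ℓ ∧ ℓ ≤ a + L then β ℓ else 0)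
        = (((Finset.Icc m (r * L - 1)).filter (fun a => a + 1 ≤ ℓ ∧ ℓ ≤ a + L)).card : ℝ)
            * β ℓ := by
    intro ℓ _
    rw [← Finset.sum_filter, Finset.sum_const, nsmul_eq_mul]
  rw [Finset.sum_congr rfl step2]
  symm
  have hsub : Finset.Icc (m + 1) m0 ⊆ Finset.range (m0 + 1) := by
    intro x hx
    simp only [Finset.mem_Icc] at hx
    simp only [Finset.mem_range]
    omega
  rw [Finset.sum_subset hsub]
  · refine Finset.sum_congr rfl fun ℓ hℓ => ?_
    rw [Finset.mem_range] at hℓ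
    by_cases hℓm : m + 1 ≤ ℓ
    · rw [count ℓ hℓm (by omega)]
    · have h1' : min L (ℓ - m) = 0 := by omega
      have h2' : (Finset.Icc m (r * L - 1)).filter (fun a => a + 1 ≤ ℓ ∧ ℓ ≤ a + L)
          = ∅ := by
        rw [Finset.filter_eq_empty_iff]
        intro a ha
        rw [Finset.mem_Icc] at ha
        omega
      rw [h1', h2']
      simp
  · intro ℓ hℓ hℓ'
    simp only [Finset.mem_range] at hℓ
    simp only [Finset.mem_Icc, not_and, not_le] at hℓ'
    have : ℓ - m = 0 := by omega
    rw [this]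
    simp
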